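/- For the single-rule program P = { a ← W } where W is the weight constraint [not a = 1] 0 (no lower bound, upper bound 0), both ∅ and {a} are stable models of P, but ∅ is the only answer set of P. -/
import Mathlib

open scoped Classical

/-- The single atom `a` is the unique element of `Unit`.  The weight constraint
`W = [not a = 1] 0`: its weight function. -/
def wgt19 (M : Finset Unit) : ℝ := if () ∈ M then 0 else 1

/-- `M ⊨ W` iff `w(W,M) ≤ 0` (no lower bound). -/
def satW19 (M : Finset Unit) : Prop := wgt19 M ≤ 0

/-- The immediate-consequence operator of the reduct `P^M` of the program
`P = { a ← W }`: the rule survives in `P^M` iff `a ∈ M` (head condition) and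
`w(W,M) ≤ 0` (upper-bound check); its reduct body (no lower bound, no positive
literals) is satisfied by any set. -/
def Top19 (M : Finset Unit) (_S : Set Unit) : Set Unit :=
  {h | h = () ∧ () ∈ M ∧ wgt19 M ≤ 0}

/-- Iterates of `T_{P^M}` from `∅`. -/
def Titer19 (M : Finset Unit) : ℕ → Set Unit
  | 0 => ∅
  | n + 1 => Top19 M (Titer19 M n)

/-- Conditional satisfaction `R ⊨_M W` (the domain of `W` is `{a}`). -/
def condSat19 (R : Set Unit) (M : Finset Unit) : Prop :=
  ∀ I : Finset Unit, R ∩ ({()} : Set Unit) ⊆ ↑I →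
    (↑I : Set Unit) ⊆ ↑M ∩ ({()} : Set Unit) → satW19 I

/-- The operator `K_P(·,M)` for `P = { a ← W }`. -/
def Kop19 (R : Set Unit) (M : Finset Unit) : Set Unit :=
  {h | h = () ∧ condSat19 R M}

/-- Iterates of `K_P(·,M)` from `∅`. -/
def Kiter19 (M : Finset Unit) : ℕ → Set Unit
  | 0 => ∅
  | n + 1 => Kop19 (Kiter19 M n) M

/-- `M` is a stable model of `P = { a ← W }`: `M ⊨ P` and `M` is the deductive
closure of `P^M`. -/
def isStable19 (M : Finset Unit) : Prop :=
  (satW19 M → () ∈ M) ∧ (↑M : Set Unit) = ⋃ n, Titer19 M n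

/-- `M` is an answer set of `P = { a ← W }`: `M ⊨ P` and `M = K_P^∞(∅,M)`. -/
def isAnswer19 (M : Finset Unit) : Prop :=
  (satW19 M → () ∈ M) ∧ (↑M : Set Unit) = ⋃ n, Kiter19 M n

lemma satW19_empty_false : ¬ satW19 ∅ := by
  simp [satW19, wgt19]

lemma condSat19_false (M : Finset Unit) : ¬ condSat19 ∅ M := by
  intro h
  exact satW19_empty_false (h ∅ (by simp) (by simp))

lemma Kiter19_empty (M : Finset Unit) (n : ℕ) : Kiter19 M n = ∅ := by
  induction n with
  | zero => rfl
  | succ n ih =>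
    show Kop19 (Kiter19 M n) M = ∅
    rw [ih]
    ext x
    simp [Kop19, condSat19_false M]

/-- For the single-rule program `P = { a ← [not a = 1] 0 }`, both `∅` and `{a}`
are stable models, but `∅` is the only answer set. -/
theorem stable_vs_answer_example :
    isStable19 ∅ ∧ isStable19 {()} ∧ (∀ M : Finset Unit, isAnswer19 M ↔ M = ∅) := by
  refine ⟨⟨fun h => absurd h satW19_empty_false, ?_⟩, ⟨fun _ => by simp, ?_⟩, ?_⟩
  · ext x
    simp only [Set.mem_iUnion]
    constructor
    · intro hx; simp at hx
    · rintro ⟨n, hn⟩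
      cases n with
      | zero => exact absurd hn (by simp [Titer19])
      | succ n =>
        rcases hn with ⟨_, h2, _⟩
        simp at h2
  · ext x
    cases x
    simp only [Set.mem_iUnion]
    constructor
    · intro _
      exact ⟨1, rfl, by simp, by simp [wgt19]⟩
    · intro _; simp
  · intro M
    constructor
    · rintro ⟨_, hM⟩
      have : (↑M : Set Unit) = ∅ := by
        rw [hM]; ext x; simp [Kiter19_empty]
      ext x
      simp only [Finset.notMem_empty, iff_false]
      intro hx
      have : x ∈ (↑M : Set Unit) := hx
      rw [‹(↑M : Set Unit) = ∅›] at this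
      exact this
    · rintro rfl
      refine ⟨fun h => absurd h satW19_empty_false, ?_⟩
      ext x; simp [Kiter19_empty]
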